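/- Let G₁ and G₂ be real Hilbert spaces, A ∈ S(G₁,G₂), and let G₁′ be a closed subspace of G₁. Then G₂′ := A(G₁′) is a closed subspace of G₂, and the restriction A|_{G₁′} : G₁′ → G₂′ belongs to S(G₁′, G₂′). -/

import Mathlib

open ContinuousLinearMap
open scoped InnerProductSpace

noncomputable section

universe u v w

/-- A bounded operator `T` between real inner product spaces is *Hilbert–Schmidt* if
`∑ᵢ ‖T eᵢ‖²` is finite for some orthonormal (Hilbert) basis `(eᵢ)`. -/
def IsHilbertSchmidt {E : Type u} {F : Type v} [NormedAddCommGroup E] [InnerProductSpace ℝ E]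
    [NormedAddCommGroup F] [InnerProductSpace ℝ F] (T : E →L[ℝ] F) : Prop :=
  ∃ (ι : Type u) (b : HilbertBasis ι ℝ E), Summable fun i => ‖T (b i)‖ ^ 2

/-- A bounded operator is invertible with a bounded inverse. -/
def IsBoundedlyInvertible {E : Type u} {F : Type v} [NormedAddCommGroup E]
    [InnerProductSpace ℝ E] [NormedAddCommGroup F] [InnerProductSpace ℝ F]
    (T : E →L[ℝ] F) : Prop :=
  ∃ S : F →L[ℝ] E, S.comp T = ContinuousLinearMap.id ℝ E ∧
    T.comp S = ContinuousLinearMap.id ℝ F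

/-- `A ∈ S(G₁,G₂)`: `A` is invertible with bounded inverse and `1 - (A*A)^{1/2}` is
Hilbert–Schmidt (`(A*A)^{1/2}` being the positive square root of `A*A`). -/
def MemS {G₁ : Type u} {G₂ : Type v}
    [NormedAddCommGroup G₁] [InnerProductSpace ℝ G₁] [CompleteSpace G₁]
    [NormedAddCommGroup G₂] [InnerProductSpace ℝ G₂] [CompleteSpace G₂]
    (A : G₁ →L[ℝ] G₂) : Prop :=
  IsBoundedlyInvertible A ∧
    ∃ S : G₁ →L[ℝ] G₁, S.IsPositive ∧
      S.comp S = (ContinuousLinearMap.adjoint A).comp A ∧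
      IsHilbertSchmidt (ContinuousLinearMap.id ℝ G₁ - S)

/-- `A ∈ S(G)`: `A` is a positive, invertible operator on `G` such that `1 - A` is
Hilbert–Schmidt. -/
def MemSG {G : Type u} [NormedAddCommGroup G] [InnerProductSpace ℝ G] [CompleteSpace G]
    (A : G →L[ℝ] G) : Prop :=
  A.IsPositive ∧ IsBoundedlyInvertible A ∧
    IsHilbertSchmidt (ContinuousLinearMap.id ℝ G - A)

/-- A family of subspaces of a real Hilbert space is mutually quasi-orthogonal if some
`A ∈ S(G)` maps them to mutually orthogonal subspaces. -/
def MutuallyQuasiOrthogonal {G : Type u} [NormedAddCommGroup G] [InnerProductSpace ℝ G]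
    [CompleteSpace G] {ι : Type w} (V : ι → Submodule ℝ G) : Prop :=
  ∃ A : G →L[ℝ] G, MemSG A ∧
    ∀ i j, i ≠ j → ∀ x ∈ V i, ∀ y ∈ V j, ⟪A x, A y⟫_ℝ = 0

/-!
`A(V)` is closed, being the preimage of `V` under `A⁻¹`, and `A⁻¹` restricts to an inverse of
`A' = A|_V`. The operator `A'* A' = P_V (A* A)|_V` on `V` is coercive, so it has a positive square
root `S'`, obtained from the Banach fixed point theorem. Since `1 + S' ≥ 1`,
`‖(1 - S') u‖ ≤ ‖(1 - S'²) u‖ = ‖P_V (1 - A* A) u‖ ≤ ‖(1 - A* A) u‖`,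
and `1 - A* A = (1 + S)(1 - S)` is Hilbert–Schmidt. Finally, the Hilbert–Schmidt sum of an
operator over any orthonormal family, such as a Hilbert basis of `V`, is bounded by its sum over a
Hilbert basis.
-/

section BanachAlgebra

variable {R : Type*} [NormedRing R]

theorem norm_mul_self_sub_mul_self_le (y z : R) :
    ‖y * y - z * z‖ ≤ (‖y‖ + ‖z‖) * ‖y - z‖ := calc
  ‖y * y - z * z‖ = ‖y * (y - z) + (y - z) * z‖ := by noncomm_ring
  _ ≤ ‖y‖ * ‖y - z‖ + ‖y - z‖ * ‖z‖ :=
    (norm_add_le _ _).trans (add_le_add (norm_mul_le _ _) (norm_mul_le _ _))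
  _ = (‖y‖ + ‖z‖) * ‖y - z‖ := by ring

theorem exists_nonneg_lt_one_add_mul_self_eq {t : ℝ} (ht0 : 0 ≤ t) (ht1 : t < 1) :
    ∃ r : ℝ, 0 ≤ r ∧ r < 1 ∧ t + r * r = 2 * r := by
  refine ⟨1 - √(1 - t), ?_, ?_, ?_⟩
  · linarith [Real.sqrt_le_one (x := 1 - t) |>.mpr (by linarith)]
  · linarith [Real.sqrt_pos.mpr (sub_pos.mpr ht1)]
  · nlinarith [Real.sq_sqrt (sub_nonneg.mpr ht1.le)]

variable [NormedAlgebra ℝ R] [CompleteSpace R] [StarRing R] [StarModule ℝ R] [NormedStarGroup R]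

open Metric in
/-- `y = 1 - √(1 - a)` is the fixed point of `y ↦ (a + y²) / 2` on a ball of radius `r < 1`
with `‖a‖ + r² = 2r`, on which this map is an `r`-contraction; `star y` is a fixed point too,
so `y` is self-adjoint by uniqueness. -/
theorem exists_one_sub_mul_self_eq_one_sub {a : R} (ha : IsSelfAdjoint a) (h : ‖a‖ < 1) :
    ∃ y : R, IsSelfAdjoint y ∧ ‖y‖ < 1 ∧ (1 - y) * (1 - y) = 1 - a := by
  obtain ⟨r, hr0, hr1, hr⟩ := exists_nonneg_lt_one_add_mul_self_eq (norm_nonneg a) h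
  let f : R → R := fun y => (2 : ℝ)⁻¹ • (a + y * y)
  have hmaps : ∀ y ∈ closedBall (0 : R) r, f y ∈ closedBall (0 : R) r := by
    intro y hy
    rw [mem_closedBall_zero_iff] at hy ⊢
    have : ‖a + y * y‖ ≤ ‖a‖ + r * r :=
      (norm_add_le _ _).trans (add_le_add le_rfl
        ((norm_mul_le _ _).trans (mul_le_mul hy hy (norm_nonneg _) hr0)))
    simp only [f, norm_smul]
    norm_num
    linarith
  let Φ : closedBall (0 : R) r → closedBall (0 : R) r := fun y => ⟨f y, hmaps y y.2⟩
  have hΦ : ContractingWith ⟨r, hr0⟩ Φ := by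
    refine ⟨by exact_mod_cast hr1, LipschitzWith.of_dist_le_mul fun y z =>
      show dist (Φ y) (Φ z) ≤ r * dist y z from ?_⟩
    have hyz : (‖(y : R)‖ + ‖(z : R)‖) * ‖(y : R) - z‖ ≤ (r + r) * ‖(y : R) - z‖ :=
      mul_le_mul_of_nonneg_right (add_le_add (mem_closedBall_zero_iff.mp y.2)
        (mem_closedBall_zero_iff.mp z.2)) (norm_nonneg _)
    have := norm_mul_self_sub_mul_self_le (y : R) z
    simp only [Subtype.dist_eq, dist_eq_norm, Φ, f, ← smul_sub, add_sub_add_left_eq_sub,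
      norm_smul]
    norm_num
    nlinarith
  have : Nonempty (closedBall (0 : R) r) := ⟨⟨0, mem_closedBall_self hr0⟩⟩
  have : CompleteSpace (closedBall (0 : R) r) := isClosed_closedBall.completeSpace_coe
  set y := ContractingWith.fixedPoint Φ hΦ
  have hy : f y = y := congrArg Subtype.val (ContractingWith.fixedPoint_isFixedPt (f := Φ) hΦ)
  have hy_norm : ‖(y : R)‖ ≤ r := mem_closedBall_zero_iff.mp y.2
  have hsa : star (y : R) = y := by
    have hstar : star (y : R) ∈ closedBall (0 : R) r := by
      rwa [mem_closedBall_zero_iff, norm_star]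
    refine congrArg Subtype.val (ContractingWith.fixedPoint_unique (x := ⟨_, hstar⟩) hΦ
      (Subtype.ext ?_))
    change f (star (y : R)) = star (y : R)
    conv_rhs => rw [← hy]
    simp [f, star_mul, ha.star_eq]
  refine ⟨y, hsa, hy_norm.trans_lt hr1, ?_⟩
  have h2y : (y : R) + y = a + y * y := by
    conv_lhs => rw [← hy]
    simp only [f, ← two_smul ℝ, smul_smul]
    norm_num
  calc (1 - (y : R)) * (1 - y) = 1 - (y + y) + y * y := by noncomm_ring
    _ = 1 - a := by rw [h2y]; abel

end BanachAlgebra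

section RealHilbert

variable {E : Type*} [NormedAddCommGroup E] [InnerProductSpace ℝ E]

theorem ContinuousLinearMap.norm_le_of_forall_abs_inner_le {a : E →L[ℝ] E}
    (ha : (a : E →ₗ[ℝ] E).IsSymmetric) {q : ℝ} (hq : 0 ≤ q)
    (h : ∀ x, |⟪a x, x⟫_ℝ| ≤ q * ‖x‖ ^ 2) : ‖a‖ ≤ q := by
  rw [a.norm_eq_iSup_rayleighQuotient ha]
  refine ciSup_le fun x => ?_
  rcases eq_or_ne x 0 with rfl | hx
  · simpa using hq
  rw [rayleighQuotient, reApplyInnerSelf_apply, RCLike.re_to_real, abs_div, abs_sq,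
    div_le_iff₀ (by positivity)]
  exact h x

theorem ContinuousLinearMap.IsPositive.norm_one_sub_apply_le {S : E →L[ℝ] E} (hS : S.IsPositive)
    (z : E) : ‖(1 - S) z‖ ≤ ‖(1 - S * S) z‖ := by
  set w := (1 - S) z
  have hw : (1 - S * S) z = w + S w := by
    rw [show 1 - S * S = (1 + S) * (1 - S) by noncomm_ring]; rfl
  have : ‖w‖ * ‖w‖ ≤ ‖w + S w‖ * ‖w‖ := calc
    ‖w‖ * ‖w‖ ≤ ⟪w + S w, w⟫_ℝ := by
      rw [inner_add_left, real_inner_self_eq_norm_mul_norm]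
      linarith [hS.inner_nonneg_left w]
    _ ≤ ‖w + S w‖ * ‖w‖ := real_inner_le_norm _ _
  rw [hw]
  rcases (norm_nonneg w).eq_or_lt with h0 | hpos
  · rw [← h0]; exact norm_nonneg _
  · exact le_of_mul_le_mul_right this hpos

variable [CompleteSpace E]

theorem ContinuousLinearMap.isPositive_one_sub_of_norm_le_one {y : E →L[ℝ] E} (hy : IsSelfAdjoint y)
    (h : ‖y‖ ≤ 1) : (1 - y).IsPositive := by
  refine ⟨(IsSelfAdjoint.one _ |>.sub hy).isSymmetric, fun x => ?_⟩
  rw [reApplyInnerSelf_apply, RCLike.re_to_real, sub_apply, one_apply_eq_self, inner_sub_left,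
    real_inner_self_eq_norm_mul_norm, sub_nonneg]
  calc ⟪y x, x⟫_ℝ ≤ ‖y x‖ * ‖x‖ := real_inner_le_norm _ _
    _ ≤ ‖x‖ * ‖x‖ := by
      gcongr
      exact (y.le_opNorm x).trans (by simpa using mul_le_mul_of_nonneg_right h (norm_nonneg x))

theorem ContinuousLinearMap.exists_isPositive_mul_self_eq {T : E →L[ℝ] E} (hT : IsSelfAdjoint T)
    {m : ℝ} (hm : 0 < m) (hlow : ∀ x, m * ‖x‖ ^ 2 ≤ ⟪T x, x⟫_ℝ) :
    ∃ S : E →L[ℝ] E, S.IsPositive ∧ S * S = T := by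
  set c := ‖T‖ + m
  have hc : 0 < c := by positivity
  set a : E →L[ℝ] E := 1 - c⁻¹ • T
  have ha : IsSelfAdjoint a := (IsSelfAdjoint.one _).sub ((IsSelfAdjoint.all _).smul hT)
  have ha_inner : ∀ x, ⟪a x, x⟫_ℝ = ‖x‖ ^ 2 - c⁻¹ * ⟪T x, x⟫_ℝ := fun x => by
    simp [a, inner_sub_left, inner_smul_left]
  have hq : 0 ≤ 1 - m / c := by rw [sub_nonneg, div_le_one hc]; linarith [norm_nonneg T]
  have ha_norm : ‖a‖ ≤ 1 - m / c := by
    refine norm_le_of_forall_abs_inner_le ha.isSymmetric hq fun x => ?_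
    have hTx : ⟪T x, x⟫_ℝ ≤ c * ‖x‖ ^ 2 := calc
      ⟪T x, x⟫_ℝ ≤ ‖T x‖ * ‖x‖ := real_inner_le_norm _ _
      _ ≤ ‖T‖ * ‖x‖ * ‖x‖ := by gcongr; exact T.le_opNorm x
      _ ≤ c * ‖x‖ ^ 2 := by nlinarith [norm_nonneg x]
    have hupper : c⁻¹ * ⟪T x, x⟫_ℝ ≤ ‖x‖ ^ 2 := by rw [inv_mul_le_iff₀ hc]; exact hTx
    have hlower : m / c * ‖x‖ ^ 2 ≤ c⁻¹ * ⟪T x, x⟫_ℝ := by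
      rw [div_eq_inv_mul, mul_assoc]; exact mul_le_mul_of_nonneg_left (hlow x) (by positivity)
    rw [ha_inner, abs_le]
    constructor <;> nlinarith [sq_nonneg ‖x‖]
  obtain ⟨y, hy, hy1, hyy⟩ := exists_one_sub_mul_self_eq_one_sub ha
    (ha_norm.trans_lt (by linarith [div_pos hm hc]))
  refine ⟨√c • (1 - y),
    (isPositive_one_sub_of_norm_le_one hy hy1.le).smul_of_nonneg (Real.sqrt_nonneg c), ?_⟩
  rw [smul_mul_smul, Real.mul_self_sqrt hc.le, hyy, sub_sub_cancel, smul_smul,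
    mul_inv_cancel₀ hc.ne', one_smul]

end RealHilbert

section HilbertSchmidt

variable {E F G H : Type*} [NormedAddCommGroup E] [InnerProductSpace ℝ E]
  [NormedAddCommGroup F] [InnerProductSpace ℝ F] [NormedAddCommGroup G] [InnerProductSpace ℝ G]
  [NormedAddCommGroup H] [InnerProductSpace ℝ H] {ι J : Type*}

theorem Orthonormal.tsum_ofReal_inner_sq_le {v : ι → E} (hv : Orthonormal ℝ v) (x : E) :
    ∑' i, ENNReal.ofReal (⟪v i, x⟫_ℝ ^ 2) ≤ ENNReal.ofReal (‖x‖ ^ 2) := by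
  have hsum : Summable fun i => ⟪v i, x⟫_ℝ ^ 2 := by
    simpa only [Real.norm_eq_abs, sq_abs] using hv.inner_products_summable x
  rw [← ENNReal.ofReal_tsum_of_nonneg (fun _ => sq_nonneg _) hsum]
  gcongr
  simpa only [Real.norm_eq_abs, sq_abs] using hv.tsum_inner_products_le x

theorem HilbertBasis.tsum_ofReal_inner_sq (b : HilbertBasis ι ℝ E) (x : E) :
    ∑' i, ENNReal.ofReal (⟪b i, x⟫_ℝ ^ 2) = ENNReal.ofReal (‖x‖ ^ 2) := by
  have h : HasSum (fun i => ⟪b i, x⟫_ℝ ^ 2) (‖x‖ ^ 2) := by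
    simpa only [real_inner_comm x, ← sq, real_inner_self_eq_norm_sq]
      using b.hasSum_inner_mul_inner x x
  rw [← ENNReal.ofReal_tsum_of_nonneg (fun _ => sq_nonneg _) h.summable, h.tsum_eq]

/-- With a Hilbert basis `c` of `F`, Parseval's identity, Bessel's inequality and `T†` give
`∑ⱼ ‖T vⱼ‖² ≤ ∑ₖ ‖T† cₖ‖² ≤ ∑ᵢ ‖T bᵢ‖²`. -/
theorem ContinuousLinearMap.tsum_ofReal_norm_apply_sq_le [CompleteSpace E] [CompleteSpace F]
    (T : E →L[ℝ] F) (b : HilbertBasis ι ℝ E) {v : J → E} (hv : Orthonormal ℝ v) :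
    ∑' j, ENNReal.ofReal (‖T (v j)‖ ^ 2) ≤ ∑' i, ENNReal.ofReal (‖T (b i)‖ ^ 2) := by
  obtain ⟨K, c, -⟩ := exists_hilbertBasis ℝ F
  have hT : ∀ x y, ⟪y, T x⟫_ℝ = ⟪x, adjoint T y⟫_ℝ := fun x y => by
    rw [adjoint_inner_right, real_inner_comm]
  calc ∑' j, ENNReal.ofReal (‖T (v j)‖ ^ 2)
      = ∑' k, ∑' j, ENNReal.ofReal (⟪v j, adjoint T (c k)⟫_ℝ ^ 2) := by
        simp_rw [← c.tsum_ofReal_inner_sq, hT]; exact ENNReal.tsum_comm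
    _ ≤ ∑' k, ENNReal.ofReal (‖adjoint T (c k)‖ ^ 2) :=
        ENNReal.tsum_le_tsum fun k => hv.tsum_ofReal_inner_sq_le _
    _ = ∑' i, ∑' k, ENNReal.ofReal (⟪c k, T (b i)⟫_ℝ ^ 2) := by
        simp_rw [← b.tsum_ofReal_inner_sq, hT]; exact ENNReal.tsum_comm
    _ ≤ ∑' i, ENNReal.ofReal (‖T (b i)‖ ^ 2) :=
        ENNReal.tsum_le_tsum fun i => c.orthonormal.tsum_ofReal_inner_sq_le _

theorem IsHilbertSchmidt.summable_of_orthonormal [CompleteSpace E] [CompleteSpace F]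
    {T : E →L[ℝ] F} (hT : IsHilbertSchmidt T) {v : J → E} (hv : Orthonormal ℝ v) :
    Summable fun j => ‖T (v j)‖ ^ 2 := by
  obtain ⟨ι, b, hb⟩ := hT
  have := ENNReal.summable_toReal
    (ne_top_of_le_ne_top hb.tsum_ofReal_ne_top (T.tsum_ofReal_norm_apply_sq_le b hv))
  simpa only [ENNReal.toReal_ofReal (sq_nonneg _)] using this

theorem IsHilbertSchmidt.comp_left {T : E →L[ℝ] F} (hT : IsHilbertSchmidt T) (R : F →L[ℝ] G) :
    IsHilbertSchmidt (R.comp T) := by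
  obtain ⟨ι, b, hb⟩ := hT
  refine ⟨ι, b, (hb.mul_left (‖R‖ ^ 2)).of_nonneg_of_le (fun _ => sq_nonneg _) fun i => ?_⟩
  rw [← mul_pow]
  gcongr
  exact R.le_opNorm _

theorem IsHilbertSchmidt.of_norm_apply_le [CompleteSpace E] [CompleteSpace F] [CompleteSpace G]
    {K : E →L[ℝ] F} (hK : IsHilbertSchmidt K) (f : G →ₗᵢ[ℝ] E) {T : G →L[ℝ] H}
    (h : ∀ x, ‖T x‖ ≤ ‖K (f x)‖) : IsHilbertSchmidt T := by
  obtain ⟨w, e, -⟩ := exists_hilbertBasis ℝ G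
  refine ⟨w, e, (hK.summable_of_orthonormal (e.orthonormal.comp_linearIsometry f)).of_nonneg_of_le
    (fun _ => sq_nonneg _) fun i => ?_⟩
  gcongr
  exact h _

end HilbertSchmidt

section Restriction

variable {E F : Type*} [NormedAddCommGroup E] [InnerProductSpace ℝ E]
  [NormedAddCommGroup F] [InnerProductSpace ℝ F]

theorem ContinuousLinearMap.adjoint_codRestrict_comp_codRestrict [CompleteSpace E]
    [CompleteSpace F] (f : E →L[ℝ] F) (W : Submodule ℝ F) [CompleteSpace W] (h : ∀ x, f x ∈ W) :
    adjoint (f.codRestrict W h) ∘L f.codRestrict W h = adjoint f ∘L f := by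
  ext x
  refine ext_inner_right ℝ fun y => ?_
  simp only [comp_apply, adjoint_inner_left, Submodule.coe_inner, coe_codRestrict_apply]

theorem IsBoundedlyInvertible.exists_pos_mul_norm_sq_le {T : E →L[ℝ] F}
    (hT : IsBoundedlyInvertible T) : ∃ m > 0, ∀ x, m * ‖x‖ ^ 2 ≤ ‖T x‖ ^ 2 := by
  obtain ⟨B, hBT, -⟩ := hT
  refine ⟨((‖B‖ + 1)⁻¹) ^ 2, by positivity, fun x => ?_⟩
  have hx : ‖x‖ ≤ (‖B‖ + 1) * ‖T x‖ := calc
    ‖x‖ = ‖B (T x)‖ := by rw [← comp_apply, hBT, id_apply]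
    _ ≤ ‖B‖ * ‖T x‖ := B.le_opNorm _
    _ ≤ (‖B‖ + 1) * ‖T x‖ := by gcongr; linarith
  rw [← mul_pow]
  gcongr
  rwa [inv_mul_le_iff₀ (by positivity)]

theorem IsBoundedlyInvertible.isClosed_map {T : E →L[ℝ] F} (hT : IsBoundedlyInvertible T)
    {V : Submodule ℝ E} (hV : IsClosed (V : Set E)) :
    IsClosed (V.map (T : E →ₗ[ℝ] F) : Set F) := by
  obtain ⟨B, hBT, hTB⟩ := hT
  rw [Submodule.map_coe, Set.image_eq_preimage_of_inverse (g := B)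
    (fun x => congr($hBT x)) (fun y => congr($hTB y))]
  exact hV.preimage B.continuous

theorem IsBoundedlyInvertible.restrict {T : E →L[ℝ] F} (hT : IsBoundedlyInvertible T)
    (V : Submodule ℝ E) :
    IsBoundedlyInvertible ((T.comp V.subtypeL).codRestrict (V.map (T : E →ₗ[ℝ] F))
      (fun x => Submodule.mem_map_of_mem x.2)) := by
  obtain ⟨B, hBT, hTB⟩ := hT
  have hB : ∀ y : V.map (T : E →ₗ[ℝ] F), B y ∈ V := by
    rintro ⟨-, x, hx, rfl⟩
    simpa [← comp_apply, hBT] using hx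
  refine ⟨(B.comp (V.map (T : E →ₗ[ℝ] F)).subtypeL).codRestrict V hB, ?_, ?_⟩
  · ext x
    exact congr($hBT x)
  · ext y
    exact congr($hTB y)

end Restriction

theorem memS_restrict {G₁ : Type u} {G₂ : Type v}
    [NormedAddCommGroup G₁] [InnerProductSpace ℝ G₁] [CompleteSpace G₁]
    [NormedAddCommGroup G₂] [InnerProductSpace ℝ G₂] [CompleteSpace G₂]
    (A : G₁ →L[ℝ] G₂) (hA : MemS A)
    (V : Submodule ℝ G₁) (hV : IsClosed (V : Set G₁)) :
    ∃ h₂ : IsClosed ((V.map (A : G₁ →ₗ[ℝ] G₂) : Submodule ℝ G₂) : Set G₂),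
      haveI : CompleteSpace V := hV.completeSpace_coe
      haveI : CompleteSpace (V.map (A : G₁ →ₗ[ℝ] G₂)) := h₂.completeSpace_coe
      MemS ((A.comp V.subtypeL).codRestrict (V.map (A : G₁ →ₗ[ℝ] G₂))
        (fun x => Submodule.mem_map_of_mem x.2)) := by
  obtain ⟨hinv, S, -, hSS, hHS⟩ := hA
  have hW := hinv.isClosed_map hV
  refine ⟨hW, ?_⟩
  have : CompleteSpace V := hV.completeSpace_coe
  have : CompleteSpace (V.map (A : G₁ →ₗ[ℝ] G₂)) := hW.completeSpace_coe
  set A' := (A.comp V.subtypeL).codRestrict (V.map (A : G₁ →ₗ[ℝ] G₂))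
    (fun x => Submodule.mem_map_of_mem x.2)
  have hT' : adjoint A' ∘L A' = V.orthogonalProjectionOnto ∘L (adjoint A ∘L A) ∘L V.subtypeL := by
    refine (adjoint_codRestrict_comp_codRestrict _ _ _).trans ?_
    rw [adjoint_comp, V.adjoint_subtypeL]
    rfl
  obtain ⟨m, hm, hAm⟩ := hinv.exists_pos_mul_norm_sq_le
  obtain ⟨S', hS', hS'S'⟩ := exists_isPositive_mul_self_eq
    (isPositive_adjoint_comp_self A').isSelfAdjoint hm fun u => by
      rw [comp_apply, adjoint_inner_left, real_inner_self_eq_norm_sq]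
      exact hAm u
  refine ⟨hinv.restrict V, S', hS', hS'S', ?_⟩
  have hK : IsHilbertSchmidt (1 - adjoint A ∘L A) := by
    rw [← hSS, ← mul_def, show 1 - S * S = (1 + S) * (1 - S) by noncomm_ring]
    exact hHS.comp_left (1 + S)
  refine hK.of_norm_apply_le V.subtypeₗᵢ fun u => ?_
  calc ‖(ContinuousLinearMap.id ℝ V - S') u‖ ≤ ‖(1 - S' * S') u‖ := hS'.norm_one_sub_apply_le u
    _ = ‖V.orthogonalProjectionOnto ((1 - adjoint A ∘L A) u)‖ := by
      rw [hS'S', hT']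
      simp
    _ ≤ _ := V.norm_orthogonalProjectionOnto_apply_le _

end
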